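/- arXiv:2410.20289 — 2 statements merged into one kernel-verified Lean document; each statement's English description precedes it below -/
import Mathlib

section
/- Let d ∈ ℕ and suppose P_{d'} = 1 for every d' > d. Then for all n⁻, n⁰, n⁺ ∈ ℕ^p: k_d(n⁻, n⁰, n⁺) = 1 if n⁰ = 0, and k_d(n⁻, n⁰, n⁺) = 1 − P_d if n⁰ ≠ 0. -/
/-- Total weight `W(v) = Σ_{i : v_i ≠ 0} w_i` of the axes with at least one available split. -/
noncomputable def bartW (p : ℕ) (w : Fin p → ℝ) (v : Fin p → ℕ) : ℝ :=
  ∑ i ∈ Finset.univ.filter (fun i => v i ≠ 0), w i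

/-- The BART sub-correlation function `k_d(n⁻, n⁰, n⁺)`, defined by well-founded recursion
on `Σ_i (n⁻_i + n⁺_i)`. -/
noncomputable def bartK (p : ℕ) (w : Fin p → ℝ) (P : ℕ → ℝ)
    (d : ℕ) (nm n0 np : Fin p → ℕ) : ℝ :=
  if ∀ i, nm i + n0 i + np i = 0 then 1
  else
    1 - P d * (1 - (1 / bartW p w (fun i => nm i + n0 i + np i)) *
      ∑ i ∈ Finset.univ.filter (fun i => nm i + n0 i + np i ≠ 0),
        (w i / ((nm i + n0 i + np i : ℕ) : ℝ)) *
          ((∑ k ∈ (Finset.range (nm i)).attach,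
              bartK p w P (d+1) (Function.update nm i k.1) n0 np) +
           (∑ k ∈ (Finset.range (np i)).attach,
              bartK p w P (d+1) nm n0 (Function.update np i k.1))))
termination_by ∑ i, (nm i + np i)
decreasing_by
  · have hk : k.1 < nm i := Finset.mem_range.mp k.2
    refine Finset.sum_lt_sum (fun j _ => ?_) ⟨i, Finset.mem_univ i, ?_⟩
    · rcases eq_or_ne j i with rfl | hj
      · simp only [Function.update_self]; omega
      · simp only [Function.update_of_ne hj]; omega
    · simp only [Function.update_self]; omega
  · have hk : k.1 < np i := Finset.mem_range.mp k.2
    refine Finset.sum_lt_sum (fun j _ => ?_) ⟨i, Finset.mem_univ i, ?_⟩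
    · rcases eq_or_ne j i with rfl | hj
      · simp only [Function.update_self]; omega
      · simp only [Function.update_of_ne hj]; omega
    · simp only [Function.update_self]; omega

/-! Both cases follow by induction along the recursion defining `bartK`. If `n⁰ = 0`, every
child equals `1` and the weights `w_i (n⁻_i + n⁺_i) / n_i` add up to `W(n)`, so the bracket
multiplying `P_d` vanishes. If `n⁰ ≠ 0`, every child keeps the same `n⁰` and equals
`1 - P_{d+1} = 0`, so the bracket is `1`. -/

section
variable {p : ℕ} {w : Fin p → ℝ} {P : ℕ → ℝ} {d : ℕ} {nm n0 np : Fin p → ℕ}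

theorem bartW_pos (hw : ∀ i, 0 < w i) {v : Fin p → ℕ} (hv : ∃ i, v i ≠ 0) : 0 < bartW p w v := by
  obtain ⟨i, hi⟩ := hv
  exact Finset.sum_pos' (fun j _ => (hw j).le) ⟨i, by simpa using hi, hw i⟩

theorem bartK_eq_of_children_eq (c : ℝ) (hn : ¬ ∀ i, nm i + n0 i + np i = 0)
    (hm : ∀ i (k : Finset.range (nm i)), bartK p w P (d + 1) (Function.update nm i k) n0 np = c)
    (hp : ∀ i (k : Finset.range (np i)), bartK p w P (d + 1) nm n0 (Function.update np i k) = c) :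
    bartK p w P d nm n0 np = 1 - P d * (1 - c / bartW p w (fun i => nm i + n0 i + np i) *
      ∑ i ∈ Finset.univ.filter (fun i => nm i + n0 i + np i ≠ 0),
        w i * ((nm i + np i : ℝ) / (nm i + n0 i + np i : ℕ))) := by
  rw [bartK, if_neg hn]
  simp only [hm, hp, Finset.sum_const, Finset.card_attach, Finset.card_range, nsmul_eq_mul]
  rw [Finset.mul_sum, Finset.mul_sum]
  congr 3
  refine Finset.sum_congr rfl fun i _ => ?_
  ring

theorem bartK_of_n0_eq_zero (hw : ∀ i, 0 < w i) : bartK p w P d nm 0 np = 1 := by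
  induction d, nm, np using bartK.induct (n0 := 0) with
  | case1 d nm np h => rw [bartK, if_pos h]
  | case2 d nm np hn ihm ihp =>
    rw [bartK_eq_of_children_eq 1 hn ihm ihp]
    simp only [Pi.zero_apply, add_zero] at hn ⊢
    have hW := bartW_pos hw (not_forall.mp hn)
    have hsum : ∑ i ∈ Finset.univ.filter (fun i => nm i + np i ≠ 0),
        w i * ((nm i + np i : ℝ) / (nm i + np i : ℕ)) = bartW p w (fun i => nm i + np i) := by
      refine Finset.sum_congr rfl fun i hi => ?_
      have hi : (nm i + np i : ℝ) ≠ 0 := by exact_mod_cast (Finset.mem_filter.mp hi).2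
      simp [div_self hi]
    rw [hsum, div_mul_cancel₀ 1 hW.ne', sub_self, mul_zero, sub_zero]

theorem bartK_of_n0_ne_zero (hP1 : ∀ d' > d, P d' = 1) (h0 : n0 ≠ 0) :
    bartK p w P d nm n0 np = 1 - P d := by
  induction d, nm, np using bartK.induct (n0 := n0) with
  | case1 d nm np h =>
    exact absurd (funext fun i => by have := h i; simp only [Pi.zero_apply]; omega) h0
  | case2 d nm np hn ihm ihp =>
    have hP' : ∀ d' > d + 1, P d' = 1 := fun d' hd' => hP1 d' (by omega)
    rw [bartK_eq_of_children_eq 0 hn (fun i k => by rw [ihm i k hP', hP1 _ d.lt_succ_self, sub_self])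
      (fun i k => by rw [ihp i k hP', hP1 _ d.lt_succ_self, sub_self])]
    simp

end

theorem bartK_white_noise_general
    (p : ℕ) (w : Fin p → ℝ) (hw : ∀ i, 0 < w i)
    (P : ℕ → ℝ)
    (d : ℕ) (hP1 : ∀ d' > d, P d' = 1) (nm n0 np : Fin p → ℕ) :
    (n0 = 0 → bartK p w P d nm n0 np = 1) ∧
    (n0 ≠ 0 → bartK p w P d nm n0 np = 1 - P d) :=
  ⟨by rintro rfl; exact bartK_of_n0_eq_zero hw, bartK_of_n0_ne_zero hP1⟩

/-- Property 9 of Theorem 2: if `P_{d'} = 1` for every `d' > d`, then `k_d(n⁻, n⁰, n⁺) = 1`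
when `n⁰ = 0` and `k_d(n⁻, n⁰, n⁺) = 1 - P_d` when `n⁰ ≠ 0` (white noise limit). -/
theorem bartK_white_noise
    (p : ℕ) (hp : 1 ≤ p) (w : Fin p → ℝ) (hw : ∀ i, 0 < w i)
    (P : ℕ → ℝ) (hP : ∀ d, P d ∈ Set.Icc (0 : ℝ) 1)
    (d : ℕ) (hP1 : ∀ d' > d, P d' = 1) (nm n0 np : Fin p → ℕ) :
    (n0 = 0 → bartK p w P d nm n0 np = 1) ∧
    (n0 ≠ 0 → bartK p w P d nm n0 np = 1 - P d) :=
  bartK_white_noise_general p w hw P d hP1 nm n0 np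
end

section
/- Let d ∈ ℕ and let n⁻, n⁰, n⁺ ∈ ℕ^p with n⁰ ≠ 0. Then the one-step truncation bounds on k_d are given explicitly by k^{d+1}_{d,0}(n⁻, n⁰, n⁺) = 1 − (P_d/W(n))·Σ_{i : n_i ≠ 0} w_i·(n⁰_i/n_i + P_{d+1}·(1 − n⁰_i/n_i)) and k^{d+1}_{d,1}(n⁻, n⁰, n⁺) = 1 − (P_d/W(n))·Σ_{i : n_i ≠ 0} w_i·n⁰_i/n_i; consequently k^{d+1}_{d,0}(n⁻, n⁰, n⁺) ≤ k_d(n⁻, n⁰, n⁺) ≤ k^{d+1}_{d,1}(n⁻, n⁰, n⁺), and the width of this bounding interval equals (P_d·P_{d+1}/W(n))·Σ_{i : n_i ≠ 0} w_i·(1 − n⁰_i/n_i). -/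
/-- The truncated BART sub-correlation function `k^D_{d,γ}`: same recursion as `k_d` for
`d < D`, with base cases `1` if `n = 0`, `1` at depth `D` if `n⁰ = 0`, and
`1 - (1-γ)·P_D` at depth `D` if `n⁰ ≠ 0`. -/
noncomputable def bartKT (p : ℕ) (w : Fin p → ℝ) (P : ℕ → ℝ) (D : ℕ) (γ : ℝ)
    (d : ℕ) (nm n0 np : Fin p → ℕ) : ℝ :=
  if ∀ i, nm i + n0 i + np i = 0 then 1
  else if D ≤ d then
    (if ∀ i, n0 i = 0 then 1 else 1 - (1 - γ) * P D)
  else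
    1 - P d * (1 - (1 / bartW p w (fun i => nm i + n0 i + np i)) *
      ∑ i ∈ Finset.univ.filter (fun i => nm i + n0 i + np i ≠ 0),
        (w i / ((nm i + n0 i + np i : ℕ) : ℝ)) *
          ((∑ k ∈ Finset.range (nm i),
              bartKT p w P D γ (d+1) (Function.update nm i k) n0 np) +
           (∑ k ∈ Finset.range (np i),
              bartKT p w P D γ (d+1) nm n0 (Function.update np i k))))
termination_by D - d
decreasing_by all_goals omega

/-!
At depth `d + 1` the truncated function with `n⁰ ≠ 0` is the constant `1 - (1 - γ) P_{d+1}`, so a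
single unfolding of the recursion gives `k^{d+1}_{d,γ}` in closed form: the children of axis `i`
contribute `(w_i / n_i)(n⁻_i + n⁺_i) = w_i (1 - n⁰_i / n_i)` times that constant. Along the
recursion every `k_{d+1}` lies in `[1 - P_{d+1}, 1]`, and one recursive step is monotone in the
values at the children, so `k_d` is squeezed between the choices `γ = 0` and `γ = 1`.
-/

open Finset

lemma sum_mul_add_mul_one_sub {ι : Type*} (s : Finset ι) (w a : ι → ℝ) (c : ℝ) :
    ∑ i ∈ s, w i * (a i + c * (1 - a i)) = ∑ i ∈ s, w i * a i + c * ∑ i ∈ s, w i * (1 - a i) := by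
  rw [mul_sum, ← sum_add_distrib]
  exact sum_congr rfl fun i _ => by ring

section

variable {p : ℕ} {w : Fin p → ℝ} {P : ℕ → ℝ} {nm n0 np : Fin p → ℕ}

/-- `f a b` stands for the value at the child `(a, n⁰, b)`. -/
noncomputable def bartChildSum (w : Fin p → ℝ) (f : (Fin p → ℕ) → (Fin p → ℕ) → ℝ)
    (nm n0 np : Fin p → ℕ) : ℝ :=
  ∑ i ∈ univ.filter (fun i => nm i + n0 i + np i ≠ 0),
    (w i / ((nm i + n0 i + np i : ℕ) : ℝ)) *
      ((∑ k ∈ range (nm i), f (Function.update nm i k) np) +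
        (∑ k ∈ range (np i), f nm (Function.update np i k)))

lemma bartK_eq_of_not_forall_eq_zero (d : ℕ) (hn : ¬ ∀ i, nm i + n0 i + np i = 0) :
    bartK p w P d nm n0 np =
      1 - P d * (1 - 1 / bartW p w (fun i => nm i + n0 i + np i) *
        bartChildSum w (fun a b => bartK p w P (d + 1) a n0 b) nm n0 np) := by
  rw [bartK, if_neg hn, bartChildSum]
  congr 4
  refine sum_congr rfl fun i _ => ?_
  rw [sum_attach (range (nm i)) (fun k => bartK p w P (d + 1) (Function.update nm i k) n0 np),
    sum_attach (range (np i)) (fun k => bartK p w P (d + 1) nm n0 (Function.update np i k))]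

lemma bartKT_eq_of_lt {D d : ℕ} (γ : ℝ) (hn : ¬ ∀ i, nm i + n0 i + np i = 0) (hd : d < D) :
    bartKT p w P D γ d nm n0 np =
      1 - P d * (1 - 1 / bartW p w (fun i => nm i + n0 i + np i) *
        bartChildSum w (fun a b => bartKT p w P D γ (d + 1) a n0 b) nm n0 np) := by
  rw [bartKT, if_neg hn, if_neg hd.not_ge, bartChildSum]

lemma not_forall_add_eq_zero (hn0 : n0 ≠ 0) : ¬ ∀ i, nm i + n0 i + np i = 0 := by
  obtain ⟨j, hj⟩ := Function.ne_iff.1 hn0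
  exact fun h => hj (by have := h j; simp only [Pi.zero_apply]; omega)

lemma bartW_pos_s13 (hw : ∀ i, 0 < w i) (hn0 : n0 ≠ 0) :
    0 < bartW p w (fun i => nm i + n0 i + np i) := by
  obtain ⟨j, hj⟩ := Function.ne_iff.1 hn0
  rw [Pi.zero_apply] at hj
  exact sum_pos' (fun i _ => (hw i).le) ⟨j, by simp only [mem_filter, mem_univ, true_and]; omega,
    hw j⟩

lemma bartKT_self (D : ℕ) (γ : ℝ) (hn0 : n0 ≠ 0) :
    bartKT p w P D γ D nm n0 np = 1 - (1 - γ) * P D := by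
  rw [bartKT, if_neg (not_forall_add_eq_zero hn0), if_pos le_rfl,
    if_neg (show ¬ ∀ i, n0 i = 0 from fun h => hn0 (funext h))]

lemma bartChildSum_const (c : ℝ) :
    bartChildSum w (fun _ _ => c) nm n0 np =
      c * ∑ i ∈ univ.filter (fun i => nm i + n0 i + np i ≠ 0),
        w i * (1 - (n0 i : ℝ) / ((nm i + n0 i + np i : ℕ) : ℝ)) := by
  rw [bartChildSum, mul_sum]
  refine sum_congr rfl fun i hi => ?_
  have hn : ((nm i + n0 i + np i : ℕ) : ℝ) ≠ 0 := Nat.cast_ne_zero.2 (mem_filter.1 hi).2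
  simp only [sum_const, card_range, nsmul_eq_mul]
  field_simp
  push_cast
  ring

lemma bartChildSum_mono {f g : (Fin p → ℕ) → (Fin p → ℕ) → ℝ} (hw : ∀ i, 0 ≤ w i)
    (hm : ∀ i, ∀ k < nm i, f (Function.update nm i k) np ≤ g (Function.update nm i k) np)
    (hp : ∀ i, ∀ k < np i, f nm (Function.update np i k) ≤ g nm (Function.update np i k)) :
    bartChildSum w f nm n0 np ≤ bartChildSum w g nm n0 np := by
  unfold bartChildSum
  gcongr with i _ k hk k hk
  · exact div_nonneg (hw i) (Nat.cast_nonneg _)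
  · exact hm i k (mem_range.1 hk)
  · exact hp i k (mem_range.1 hk)

lemma sum_mul_one_sub_div_le_bartW (hw : ∀ i, 0 ≤ w i) :
    ∑ i ∈ univ.filter (fun i => nm i + n0 i + np i ≠ 0),
        w i * (1 - (n0 i : ℝ) / ((nm i + n0 i + np i : ℕ) : ℝ)) ≤
      bartW p w (fun i => nm i + n0 i + np i) := by
  refine sum_le_sum fun i _ => mul_le_of_le_one_right (hw i) ?_
  have : 0 ≤ (n0 i : ℝ) / ((nm i + n0 i + np i : ℕ) : ℝ) := by positivity
  linarith

lemma bartK_mem_Icc (hw : ∀ i, 0 ≤ w i) (hP : ∀ d, P d ∈ Set.Icc (0 : ℝ) 1) (d : ℕ) :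
    bartK p w P d nm n0 np ∈ Set.Icc (1 - P d) 1 := by
  induction d, nm, np using bartK.induct p n0 with
  | case1 d nm np hn =>
    rw [bartK, if_pos hn]
    exact ⟨by linarith [(hP d).1], le_rfl⟩
  | case2 d nm np hn ihm ihp =>
    rw [bartK_eq_of_not_forall_eq_zero d hn]
    set W := bartW p w (fun i => nm i + n0 i + np i)
    have hlow : (0 : ℝ) ≤ 1 - P (d + 1) := by linarith [(hP (d + 1)).2]
    have hS₀ : 0 ≤ bartChildSum w (fun a b => bartK p w P (d + 1) a n0 b) nm n0 np := by
      calc (0 : ℝ) = bartChildSum w (fun _ _ => 0) nm n0 np := by rw [bartChildSum_const, zero_mul]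
        _ ≤ _ := bartChildSum_mono hw
          (fun i k hk => hlow.trans (ihm i ⟨k, mem_range.2 hk⟩).1)
          (fun i k hk => hlow.trans (ihp i ⟨k, mem_range.2 hk⟩).1)
    have hS₁ : bartChildSum w (fun a b => bartK p w P (d + 1) a n0 b) nm n0 np ≤ W := by
      calc _ ≤ bartChildSum w (fun _ _ => 1) nm n0 np :=
            bartChildSum_mono hw (fun i k hk => (ihm i ⟨k, mem_range.2 hk⟩).2)
              (fun i k hk => (ihp i ⟨k, mem_range.2 hk⟩).2)
        _ ≤ W := by rw [bartChildSum_const, one_mul]; exact sum_mul_one_sub_div_le_bartW hw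
    rw [one_div_mul_eq_div]
    have ht₀ := div_nonneg hS₀ (hS₀.trans hS₁)
    have ht₁ := div_le_one_of_le₀ hS₁ (hS₀.trans hS₁)
    exact ⟨by nlinarith [(hP d).1], by nlinarith [(hP d).1]⟩

lemma bartW_eq_sum_add_sum :
    bartW p w (fun i => nm i + n0 i + np i) =
      ∑ i ∈ univ.filter (fun i => nm i + n0 i + np i ≠ 0),
          w i * ((n0 i : ℝ) / ((nm i + n0 i + np i : ℕ) : ℝ)) +
        ∑ i ∈ univ.filter (fun i => nm i + n0 i + np i ≠ 0),
          w i * (1 - (n0 i : ℝ) / ((nm i + n0 i + np i : ℕ) : ℝ)) := by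
  rw [bartW, ← sum_add_distrib]
  exact sum_congr rfl fun i _ => by ring

lemma bartKT_succ_eq (hw : ∀ i, 0 < w i) (hn0 : n0 ≠ 0) (γ : ℝ) (d : ℕ) :
    bartKT p w P (d + 1) γ d nm n0 np =
      1 - (P d / bartW p w (fun i => nm i + n0 i + np i)) *
        ∑ i ∈ univ.filter (fun i => nm i + n0 i + np i ≠ 0),
          w i * ((n0 i : ℝ) / ((nm i + n0 i + np i : ℕ) : ℝ) +
            (1 - γ) * P (d + 1) * (1 - (n0 i : ℝ) / ((nm i + n0 i + np i : ℕ) : ℝ))) := by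
  have hW := (bartW_pos_s13 hw hn0 (nm := nm) (np := np)).ne'
  rw [bartKT_eq_of_lt γ (not_forall_add_eq_zero hn0) (lt_add_one d)]
  simp only [bartKT_self _ γ hn0, bartChildSum_const]
  rw [bartW_eq_sum_add_sum] at hW ⊢
  rw [sum_mul_add_mul_one_sub]
  generalize ∑ i ∈ univ.filter (fun i => nm i + n0 i + np i ≠ 0),
    w i * ((n0 i : ℝ) / ((nm i + n0 i + np i : ℕ) : ℝ)) = X at *
  generalize ∑ i ∈ univ.filter (fun i => nm i + n0 i + np i ≠ 0),
    w i * (1 - (n0 i : ℝ) / ((nm i + n0 i + np i : ℕ) : ℝ)) = Y at *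
  field_simp
  ring

lemma bartKT_succ_zero_le_bartK (hw : ∀ i, 0 ≤ w i) (hP : ∀ d, P d ∈ Set.Icc (0 : ℝ) 1)
    (hn0 : n0 ≠ 0) (d : ℕ) :
    bartKT p w P (d + 1) 0 d nm n0 np ≤ bartK p w P d nm n0 np := by
  have hn := not_forall_add_eq_zero hn0 (nm := nm) (np := np)
  rw [bartKT_eq_of_lt 0 hn (lt_add_one d), bartK_eq_of_not_forall_eq_zero d hn]
  gcongr
  · exact (hP d).1
  · exact one_div_nonneg.2 (sum_nonneg fun i _ => hw i)
  · have hchild : ∀ a b, bartKT p w P (d + 1) 0 (d + 1) a n0 b ≤ bartK p w P (d + 1) a n0 b :=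
      fun a b => by rw [bartKT_self _ _ hn0, sub_zero, one_mul]; exact (bartK_mem_Icc hw hP _).1
    exact bartChildSum_mono hw (fun i k _ => hchild _ _) (fun i k _ => hchild _ _)

lemma bartK_le_bartKT_succ_one (hw : ∀ i, 0 ≤ w i) (hP : ∀ d, P d ∈ Set.Icc (0 : ℝ) 1)
    (hn0 : n0 ≠ 0) (d : ℕ) :
    bartK p w P d nm n0 np ≤ bartKT p w P (d + 1) 1 d nm n0 np := by
  have hn := not_forall_add_eq_zero hn0 (nm := nm) (np := np)
  rw [bartKT_eq_of_lt 1 hn (lt_add_one d), bartK_eq_of_not_forall_eq_zero d hn]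
  gcongr
  · exact (hP d).1
  · exact one_div_nonneg.2 (sum_nonneg fun i _ => hw i)
  · have hchild : ∀ a b, bartK p w P (d + 1) a n0 b ≤ bartKT p w P (d + 1) 1 (d + 1) a n0 b :=
      fun a b => by
        rw [bartKT_self _ _ hn0, sub_self, zero_mul, sub_zero]
        exact (bartK_mem_Icc hw hP _).2
    exact bartChildSum_mono hw (fun i k _ => hchild _ _) (fun i k _ => hchild _ _)

end

theorem bartK_one_step_bounds_general
    (p : ℕ) (w : Fin p → ℝ) (hw : ∀ i, 0 < w i)
    (P : ℕ → ℝ) (hP : ∀ d, P d ∈ Set.Icc (0 : ℝ) 1)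
    (d : ℕ) (nm n0 np : Fin p → ℕ) (hn0 : n0 ≠ 0) :
    bartKT p w P (d + 1) 0 d nm n0 np =
      1 - (P d / bartW p w (fun i => nm i + n0 i + np i)) *
        ∑ i ∈ Finset.univ.filter (fun i => nm i + n0 i + np i ≠ 0),
          w i * ((n0 i : ℝ) / ((nm i + n0 i + np i : ℕ) : ℝ) +
            P (d + 1) * (1 - (n0 i : ℝ) / ((nm i + n0 i + np i : ℕ) : ℝ))) ∧
    bartKT p w P (d + 1) 1 d nm n0 np =
      1 - (P d / bartW p w (fun i => nm i + n0 i + np i)) *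
        ∑ i ∈ Finset.univ.filter (fun i => nm i + n0 i + np i ≠ 0),
          w i * ((n0 i : ℝ) / ((nm i + n0 i + np i : ℕ) : ℝ)) ∧
    (bartKT p w P (d + 1) 0 d nm n0 np ≤ bartK p w P d nm n0 np ∧
      bartK p w P d nm n0 np ≤ bartKT p w P (d + 1) 1 d nm n0 np) ∧
    bartKT p w P (d + 1) 1 d nm n0 np - bartKT p w P (d + 1) 0 d nm n0 np =
      (P d * P (d + 1) / bartW p w (fun i => nm i + n0 i + np i)) *
        ∑ i ∈ Finset.univ.filter (fun i => nm i + n0 i + np i ≠ 0),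
          w i * (1 - (n0 i : ℝ) / ((nm i + n0 i + np i : ℕ) : ℝ)) := by
  have hw₀ : ∀ i, 0 ≤ w i := fun i => (hw i).le
  have h₀ := bartKT_succ_eq (P := P) (nm := nm) (np := np) hw hn0 0 d
  have h₁ := bartKT_succ_eq (P := P) (nm := nm) (np := np) hw hn0 1 d
  simp only [sub_zero, one_mul] at h₀
  simp only [sub_self, zero_mul, add_zero] at h₁
  refine ⟨h₀, h₁, ⟨bartKT_succ_zero_le_bartK hw₀ hP hn0 d, bartK_le_bartKT_succ_one hw₀ hP hn0 d⟩,
    ?_⟩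
  rw [h₀, h₁, sum_mul_add_mul_one_sub]
  ring

/-- One-step truncation bounds on `k_d` (Equation 30 of the paper): explicit formulas for
`k^{d+1}_{d,0}` and `k^{d+1}_{d,1}` when `n⁰ ≠ 0`, the resulting bounds on `k_d`, and the
width of the bounding interval. -/
theorem bartK_one_step_bounds
    (p : ℕ) (hp : 1 ≤ p) (w : Fin p → ℝ) (hw : ∀ i, 0 < w i)
    (P : ℕ → ℝ) (hP : ∀ d, P d ∈ Set.Icc (0 : ℝ) 1)
    (d : ℕ) (nm n0 np : Fin p → ℕ) (hn0 : n0 ≠ 0) :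
    bartKT p w P (d + 1) 0 d nm n0 np =
      1 - (P d / bartW p w (fun i => nm i + n0 i + np i)) *
        ∑ i ∈ Finset.univ.filter (fun i => nm i + n0 i + np i ≠ 0),
          w i * ((n0 i : ℝ) / ((nm i + n0 i + np i : ℕ) : ℝ) +
            P (d + 1) * (1 - (n0 i : ℝ) / ((nm i + n0 i + np i : ℕ) : ℝ))) ∧
    bartKT p w P (d + 1) 1 d nm n0 np =
      1 - (P d / bartW p w (fun i => nm i + n0 i + np i)) *
        ∑ i ∈ Finset.univ.filter (fun i => nm i + n0 i + np i ≠ 0),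
          w i * ((n0 i : ℝ) / ((nm i + n0 i + np i : ℕ) : ℝ)) ∧
    (bartKT p w P (d + 1) 0 d nm n0 np ≤ bartK p w P d nm n0 np ∧
      bartK p w P d nm n0 np ≤ bartKT p w P (d + 1) 1 d nm n0 np) ∧
    bartKT p w P (d + 1) 1 d nm n0 np - bartKT p w P (d + 1) 0 d nm n0 np =
      (P d * P (d + 1) / bartW p w (fun i => nm i + n0 i + np i)) *
        ∑ i ∈ Finset.univ.filter (fun i => nm i + n0 i + np i ≠ 0),
          w i * (1 - (n0 i : ℝ) / ((nm i + n0 i + np i : ℕ) : ℝ)) :=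
  bartK_one_step_bounds_general p w hw P hP d nm n0 np hn0
end
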